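/- Let V₀ be a d×d real positive definite matrix, let x_1, …, x_m ∈ ℝ^d, and define V_t := V₀ + Σ_{s=1}^{t} x_s x_sᵀ for t = 0, 1, …, m. Suppose x_tᵀ V_{t-1}⁻¹ x_t ≤ 1 for every t, and that m · log(det V_m / det V₀) ≤ D for some D ≥ 0. Then Σ_{t=1}^{m} √(x_tᵀ V_{t-1}⁻¹ x_t) ≤ √(2D). -/

import Mathlib

/-!
Each rank-one update multiplies the determinant by `1 + uₜ`, where `uₜ = xₜᵀ Vₜ⁻¹ xₜ`, so
`∑ log (1 + uₜ) = log (det Vₘ / det V₀)`. Since `u ≤ 2 log (1 + u)` for `0 ≤ u ≤ 2`, this bounds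
`∑ uₜ` by twice the log-determinant ratio, and Cauchy–Schwarz gives
`∑ √uₜ ≤ √(m ∑ uₜ) ≤ √(2 m log (det Vₘ / det V₀)) ≤ √(2D)`.
-/

open Matrix Finset

lemma Matrix.det_add_vecMulVec {n α : Type*} [Fintype n] [DecidableEq n] [CommRing α]
    {A : Matrix n n α} (hA : IsUnit A.det) (u v : n → α) :
    (A + vecMulVec u v).det = A.det * (1 + v ⬝ᵥ A⁻¹ *ᵥ u) := by
  rw [vecMulVec_eq Unit, det_add_replicateCol_mul_replicateRow hA, Matrix.mul_assoc,
    ← replicateCol_mulVec, replicateRow_mul_replicateCol, det_unique (1 + _)]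
  rfl

lemma Real.le_two_mul_log_one_add {u : ℝ} (h0 : 0 ≤ u) (h2 : u ≤ 2) :
    u ≤ 2 * Real.log (1 + u) := by
  have hlog := Real.le_log_one_add_of_nonneg h0
  have : u / 2 ≤ 2 * u / (u + 2) := by
    rw [div_le_div_iff₀ two_pos (by linarith)]
    nlinarith
  linarith

lemma Real.sum_sqrt_le_sqrt_card_mul_sum {ι : Type*} (s : Finset ι) {f : ι → ℝ}
    (hf : ∀ i, 0 ≤ f i) : ∑ i ∈ s, √(f i) ≤ √(#s * ∑ i ∈ s, f i) := by
  simpa [Real.sqrt_mul (Nat.cast_nonneg _)] using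
    Real.sum_sqrt_mul_sqrt_le s (f := fun _ ↦ 1) (fun _ ↦ zero_le_one) hf

namespace Matrix

variable {n : Type*} [Fintype n]

lemma PosDef.add_sum_vecMulVec_self {ι : Type*} {A : Matrix n n ℝ} (hA : A.PosDef)
    (s : Finset ι) (x : ι → n → ℝ) : (A + ∑ i ∈ s, vecMulVec (x i) (x i)).PosDef :=
  hA.add_posSemidef <| posSemidef_sum s fun i _ ↦ by
    simpa using posSemidef_vecMulVec_self_star (x i)

lemma PosDef.dotProduct_inv_mulVec_nonneg [DecidableEq n] {A : Matrix n n ℝ} (hA : A.PosDef)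
    (x : n → ℝ) : 0 ≤ x ⬝ᵥ A⁻¹ *ᵥ x := by
  simpa using hA.inv.posSemidef.dotProduct_mulVec_nonneg x

end Matrix

section RankOneUpdates

variable {n : Type*} [Fintype n] [DecidableEq n] {V : ℕ → Matrix n n ℝ} {x : ℕ → n → ℝ}

lemma log_det_succ_eq {t : ℕ} (hV : (V t).PosDef)
    (hstep : V (t + 1) = V t + vecMulVec (x t) (x t)) :
    Real.log (V (t + 1)).det = Real.log (V t).det + Real.log (1 + x t ⬝ᵥ (V t)⁻¹ *ᵥ x t) := by
  rw [hstep, det_add_vecMulVec hV.det_pos.ne'.isUnit, Real.log_mul hV.det_pos.ne']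
  linarith [hV.dotProduct_inv_mulVec_nonneg (x t)]

lemma sum_log_one_add_eq_log_det_div (hV : ∀ t, (V t).PosDef)
    (hstep : ∀ t, V (t + 1) = V t + vecMulVec (x t) (x t)) (m : ℕ) :
    ∑ t ∈ range m, Real.log (1 + x t ⬝ᵥ (V t)⁻¹ *ᵥ x t) = Real.log ((V m).det / (V 0).det) := by
  rw [Real.log_div (hV m).det_pos.ne' (hV 0).det_pos.ne',
    ← sum_range_sub fun t ↦ Real.log (V t).det]
  exact sum_congr rfl fun t _ ↦ by rw [log_det_succ_eq (hV t) (hstep t)]; ring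

/-- The elliptical potential lemma. -/
lemma sum_le_two_mul_log_det_div (hV : ∀ t, (V t).PosDef)
    (hstep : ∀ t, V (t + 1) = V t + vecMulVec (x t) (x t)) {m : ℕ}
    (hsmall : ∀ t < m, x t ⬝ᵥ (V t)⁻¹ *ᵥ x t ≤ 2) :
    ∑ t ∈ range m, x t ⬝ᵥ (V t)⁻¹ *ᵥ x t ≤ 2 * Real.log ((V m).det / (V 0).det) := by
  rw [← sum_log_one_add_eq_log_det_div hV hstep, mul_sum]
  exact sum_le_sum fun t ht ↦ Real.le_two_mul_log_one_add
    ((hV t).dotProduct_inv_mulVec_nonneg _) (hsmall t (mem_range.mp ht))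

end RankOneUpdates

theorem sum_sqrt_bonus_le_sqrt_two_D_general {d m : ℕ}
    (V₀ : Matrix (Fin d) (Fin d) ℝ) (hV₀ : V₀.PosDef)
    (x : ℕ → (Fin d → ℝ)) (V : ℕ → Matrix (Fin d) (Fin d) ℝ)
    (hV : ∀ t, V t = V₀ + ∑ s ∈ Finset.range t, vecMulVec (x s) (x s))
    (hsmall : ∀ t < m, x t ⬝ᵥ (V t)⁻¹ *ᵥ x t ≤ 1)
    (D : ℝ)
    (hthresh : m * Real.log ((V m).det / (V 0).det) ≤ D) :
    ∑ t ∈ Finset.range m, Real.sqrt (x t ⬝ᵥ (V t)⁻¹ *ᵥ x t)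
      ≤ Real.sqrt (2 * D) := by
  have hpd : ∀ t, (V t).PosDef := fun t ↦ hV t ▸ hV₀.add_sum_vecMulVec_self _ x
  have hstep : ∀ t, V (t + 1) = V t + vecMulVec (x t) (x t) := fun t ↦ by
    rw [hV, hV, sum_range_succ, add_assoc]
  have hpotential :=
    sum_le_two_mul_log_det_div hpd hstep fun t ht ↦ (hsmall t ht).trans one_le_two
  calc ∑ t ∈ range m, √(x t ⬝ᵥ (V t)⁻¹ *ᵥ x t)
      ≤ √(m * ∑ t ∈ range m, x t ⬝ᵥ (V t)⁻¹ *ᵥ x t) := by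
        simpa using Real.sum_sqrt_le_sqrt_card_mul_sum (range m)
          fun t ↦ (hpd t).dotProduct_inv_mulVec_nonneg (x t)
    _ ≤ √(2 * D) := Real.sqrt_le_sqrt <|
        (mul_le_mul_of_nonneg_left hpotential m.cast_nonneg).trans (by linarith)

/-- Per-period regret bound under the event trigger: with
`V_t = V₀ + Σ_{s<t} x_s x_sᵀ`, if `x_tᵀ V_{t-1}⁻¹ x_t ≤ 1` for all `t` and
`m·log(det V_m / det V₀) ≤ D`, then `Σ_{t=1}^{m} √(x_tᵀ V_{t-1}⁻¹ x_t) ≤ √(2D)`. -/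
theorem sum_sqrt_bonus_le_sqrt_two_D {d m : ℕ}
    (V₀ : Matrix (Fin d) (Fin d) ℝ) (hV₀ : V₀.PosDef)
    (x : ℕ → (Fin d → ℝ)) (V : ℕ → Matrix (Fin d) (Fin d) ℝ)
    (hV : ∀ t, V t = V₀ + ∑ s ∈ Finset.range t, vecMulVec (x s) (x s))
    (hsmall : ∀ t < m, x t ⬝ᵥ (V t)⁻¹ *ᵥ x t ≤ 1)
    (D : ℝ) (hD : 0 ≤ D)
    (hthresh : m * Real.log ((V m).det / (V 0).det) ≤ D) :
    ∑ t ∈ Finset.range m, Real.sqrt (x t ⬝ᵥ (V t)⁻¹ *ᵥ x t)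
      ≤ Real.sqrt (2 * D) :=
  sum_sqrt_bonus_le_sqrt_two_D_general V₀ hV₀ x V hV hsmall D hthresh
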